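/- arXiv:0807.2626 — 2 statements merged into one kernel-verified Lean document; each statement's English description precedes it below -/
import Mathlib

section
/- For every complex s with Re(s) > 1, ζ(s, 1/2) = (2^s − 1) ζ(s), and consequently ∑_{n≥1} ((-1)^n/n!)(−1/2)^n s(s+1)⋯(s+n-1) ζ(s+n) = (2^s − 2) ζ(s); i.e., substituting α = −1/2 in the power series of ζ_1(s, α) yields Ramaswami's identity. -/
/-!
For `‖α‖ < 1` expand each term of `ζ₁(s, α) = ∑_{k ≥ 0} (k + 1 + α)^{-s}` by the binomial series
`(k + 1 + α)^{-s} = ∑_m binom(-s, m) α^m (k + 1)^{-s-m}`. The double series converges absolutely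
for `Re s > 1`, so the summations can be swapped, which gives
`ζ₁(s, α) = ∑_m binom(-s, m) α^m ζ(s + m)`. At `α = -1/2` the left side is `∑_n (n + 1/2)^{-s}`,
which splitting `ζ(s)` into odd and even terms evaluates to `(2^s - 1) ζ(s)`; the term `m = 0`
of the right side is `ζ(s)`, and `binom(-s, m) = (-1)^m s(s+1)⋯(s+m-1) / m!`.
-/

open Complex Finset

theorem Complex.ofReal_mul_cpow_of_pos {r : ℝ} (hr : 0 < r) (x y : ℂ) :
    ((r : ℂ) * x) ^ y = (r : ℂ) ^ y * x ^ y := by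
  rcases eq_or_ne x 0 with rfl | hx
  · rcases eq_or_ne y 0 with rfl | hy <;> simp [zero_cpow, *]
  have hr' : (r : ℂ) ≠ 0 := ofReal_ne_zero.mpr hr.ne'
  rw [cpow_def_of_ne_zero (mul_ne_zero hr' hx), cpow_def_of_ne_zero hr', cpow_def_of_ne_zero hx,
    log_ofReal_mul hr hx, ← exp_add, ofReal_log hr.le, add_mul]

theorem Complex.hasSum_choose_mul_pow (a : ℂ) {z : ℂ} (hz : ‖z‖ < 1) :
    HasSum (fun n ↦ Ring.choose a n * z ^ n) ((1 + z) ^ a) := by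
  have := (one_add_cpow_hasFPowerSeriesOnBall_zero (a := a)).hasSum (y := z)
    (by simpa [← ofReal_norm, ENNReal.ofReal_lt_one] using hz)
  simpa [binomialSeries, FormalMultilinearSeries.ofScalars_apply_eq, mul_comm] using this

theorem Complex.summable_norm_choose_mul_pow (a : ℂ) {r : ℝ} (hr0 : 0 ≤ r) (hr : r < 1) :
    Summable (fun n ↦ ‖Ring.choose a n‖ * r ^ n) := by
  lift r to NNReal using hr0
  have := (binomialSeries ℂ a).summable_norm_mul_pow
    (lt_of_lt_of_le (by exact_mod_cast hr) binomialSeries_radius_ge_one)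
  simpa [binomialSeries, FormalMultilinearSeries.ofScalars_norm] using this

theorem Ring.choose_neg_eq_prod {K : Type*} [Field K] [CharZero K] (a : K) (n : ℕ) :
    Ring.choose (-a) n = (-1) ^ n / n.factorial * ∏ i ∈ range n, (a + i) := by
  rw [Ring.choose_eq_smul, Polynomial.descPochhammer_smeval_eq_ascPochhammer,
    Polynomial.ascPochhammer_smeval_cast, Polynomial.ascPochhammer_smeval_eq_eval,
    ← descPochhammer_eval_eq_ascPochhammer, descPochhammer_eval_eq_prod_range, smul_eq_mul,
    div_mul_eq_mul_div, inv_mul_eq_div]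
  congr 1
  simp only [← neg_add', prod_neg, card_range]

theorem hasSum_nat_add_one_cpow_neg {s : ℂ} (hs : 1 < s.re) :
    HasSum (fun n : ℕ ↦ ((n : ℂ) + 1) ^ (-s)) (riemannZeta s) := by
  have hsum : Summable (fun n : ℕ ↦ ((n : ℂ) + 1) ^ (-s)) := by
    have := (summable_nat_add_iff 1).mpr (Complex.summable_one_div_nat_cpow.mpr hs)
    simpa [cpow_neg] using this
  simpa [zeta_eq_tsum_one_div_nat_add_one_cpow hs, cpow_neg] using hsum.hasSum

theorem hasSum_nat_add_half_cpow_neg {s : ℂ} (hs : 1 < s.re) :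
    HasSum (fun n : ℕ ↦ ((n : ℂ) + 1 / 2) ^ (-s)) ((2 ^ s - 1) * riemannZeta s) := by
  set f : ℕ → ℂ := fun n ↦ ((n : ℂ) + 1) ^ (-s)
  have hζ : HasSum f (riemannZeta s) := hasSum_nat_add_one_cpow_neg hs
  have heven (k : ℕ) : f (2 * k) = 2 ^ (-s) * ((k : ℂ) + 1 / 2) ^ (-s) := by
    simp only [f]
    rw [show ((2 * k : ℕ) : ℂ) + 1 = (2 : ℝ) * ((k + 1 / 2 : ℝ) : ℂ) by push_cast; ring,
      ofReal_mul_cpow_of_pos two_pos]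
    push_cast; rfl
  have hodd (k : ℕ) : f (2 * k + 1) = 2 ^ (-s) * f k := by
    simp only [f]
    rw [show ((2 * k + 1 : ℕ) : ℂ) + 1 = (2 : ℝ) * ((k + 1 : ℝ) : ℂ) by push_cast; ring,
      ofReal_mul_cpow_of_pos two_pos]
    push_cast; rfl
  obtain ⟨E, hE⟩ : Summable (fun k ↦ f (2 * k)) :=
    hζ.summable.comp_injective fun a b h ↦ by omega
  have hsplit : riemannZeta s = E + 2 ^ (-s) * riemannZeta s :=
    hζ.unique (hE.even_add_odd ((hζ.mul_left _).congr_fun hodd))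
  have hinv : (2 : ℂ) ^ s * 2 ^ (-s) = 1 := by rw [← cpow_add _ _ two_ne_zero]; simp
  rw [show (2 ^ s - 1) * riemannZeta s = 2 ^ s * E by
    linear_combination 2 ^ s * hsplit + riemannZeta s * hinv]
  refine (hE.mul_left (2 ^ s)).congr_fun fun k ↦ ?_
  rw [heven, ← mul_assoc, hinv, one_mul]

theorem hasSum_choose_neg_mul_pow_mul_cpow (s : ℂ) {α : ℂ} {x : ℝ} (hx : ‖α‖ < x) :
    HasSum (fun m : ℕ ↦ Ring.choose (-s) m * α ^ m * (x : ℂ) ^ (-(s + m))) ((x + α) ^ (-s)) := by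
  have hx0 : 0 < x := (norm_nonneg α).trans_lt hx
  have hx' : (x : ℂ) ≠ 0 := ofReal_ne_zero.mpr hx0.ne'
  have hz : ‖α / x‖ < 1 := by
    rwa [norm_div, norm_real, Real.norm_of_nonneg hx0.le, div_lt_one hx0]
  rw [show (x + α : ℂ) = x * (1 + α / x) by field_simp, ofReal_mul_cpow_of_pos hx0]
  refine ((hasSum_choose_mul_pow (-s) hz).mul_left ((x : ℂ) ^ (-s))).congr_fun fun m ↦ ?_
  rw [neg_add, cpow_add _ _ hx', cpow_neg _ (m : ℂ), cpow_natCast, div_pow]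
  ring

theorem summable_choose_neg_mul_pow_mul_cpow {s α : ℂ} (hs : 1 < s.re) (hα : ‖α‖ < 1) :
    Summable
      (fun p : ℕ × ℕ ↦ Ring.choose (-s) p.2 * α ^ p.2 * ((p.1 : ℂ) + 1) ^ (-(s + p.2))) := by
  have hζ : Summable (fun k : ℕ ↦ ((k : ℝ) + 1) ^ (-s.re)) := by
    have := (summable_nat_add_iff 1).mpr (Real.summable_nat_rpow.mpr (by linarith : -s.re < -1))
    simpa using this
  refine Summable.of_norm_bounded
    (hζ.mul_of_nonneg (summable_norm_choose_mul_pow (-s) (norm_nonneg α) hα)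
      (fun _ ↦ by positivity) (fun _ ↦ by positivity)) fun ⟨k, m⟩ ↦ ?_
  have hnorm : ‖((k : ℂ) + 1) ^ (-(s + m))‖ = ((k : ℝ) + 1) ^ (-s.re - m) := by
    have := norm_natCast_cpow_of_pos k.succ_pos (-(s + m))
    push_cast at this
    rw [this]; congr 1; simp only [neg_add_rev, add_re, neg_re, natCast_re]; ring
  have hle : ((k : ℝ) + 1) ^ (-s.re - m) ≤ ((k : ℝ) + 1) ^ (-s.re) :=
    Real.rpow_le_rpow_of_exponent_le (by linarith [k.cast_nonneg (α := ℝ)])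
      (by linarith [m.cast_nonneg (α := ℝ)])
  rw [norm_mul, norm_mul, norm_pow, hnorm]
  calc _ ≤ ‖Ring.choose (-s) m‖ * ‖α‖ ^ m * ((k : ℝ) + 1) ^ (-s.re) := by gcongr
    _ = _ := by ring

theorem hasSum_choose_neg_mul_pow_mul_riemannZeta {s α : ℂ} (hs : 1 < s.re) (hα : ‖α‖ < 1) :
    HasSum (fun m : ℕ ↦ Ring.choose (-s) m * α ^ m * riemannZeta (s + m))
      (∑' n : ℕ, ((n : ℂ) + 1 + α) ^ (-s)) := by
  set G : ℕ × ℕ → ℂ := fun p ↦ Ring.choose (-s) p.2 * α ^ p.2 * ((p.1 : ℂ) + 1) ^ (-(s + p.2))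
  have hG : Summable G := summable_choose_neg_mul_pow_mul_cpow hs hα
  have hrow (k : ℕ) : HasSum (fun m ↦ G (k, m)) (((k : ℂ) + 1 + α) ^ (-s)) := by
    have hk : ‖α‖ < ((k + 1 : ℕ) : ℝ) := by push_cast; linarith [k.cast_nonneg (α := ℝ)]
    have := hasSum_choose_neg_mul_pow_mul_cpow s hk
    push_cast at this
    exact this
  have hcol (m : ℕ) :
      HasSum (fun k ↦ G (k, m)) (Ring.choose (-s) m * α ^ m * riemannZeta (s + m)) := by
    have hre : 1 < (s + m).re := by rw [add_re, natCast_re]; linarith [m.cast_nonneg (α := ℝ)]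
    exact (hasSum_nat_add_one_cpow_neg hre).mul_left (Ring.choose (-s) m * α ^ m)
  rw [(hG.hasSum.prod_fiberwise hrow).tsum_eq, ← (Equiv.prodComm ℕ ℕ).tsum_eq G]
  exact hG.prod_symm.hasSum.prod_fiberwise hcol

/-- For `Re s > 1`, `ζ(s, 1/2) = (2^s − 1) ζ(s)`, and consequently substituting
`α = −1/2` in the power series of `ζ_1(s, α)` yields
`∑_{n≥1} ((-1)^n/n!)(−1/2)^n s(s+1)⋯(s+n-1) ζ(s+n) = (2^s − 2) ζ(s)`. -/
theorem hurwitzZeta_half (s : ℂ) (hs : 1 < s.re) :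
    (∑' n : ℕ, ((n : ℂ) + 1 / 2) ^ (-s)) = ((2 : ℂ) ^ s - 1) * riemannZeta s ∧
      ∑' n : ℕ, ((-1) ^ (n + 1) / ((n + 1).factorial : ℂ)) * (-(1 / 2 : ℂ)) ^ (n + 1) *
          (∏ i ∈ Finset.range (n + 1), (s + i)) * riemannZeta (s + (n + 1)) =
        ((2 : ℂ) ^ s - 2) * riemannZeta s := by
  have hhalf := hasSum_nat_add_half_cpow_neg hs
  refine ⟨hhalf.tsum_eq, ?_⟩
  have hseries := hasSum_choose_neg_mul_pow_mul_riemannZeta hs (α := -(1 / 2)) (by norm_num)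
  rw [show ∑' n : ℕ, ((n : ℂ) + 1 + -(1 / 2)) ^ (-s) = ((2 : ℂ) ^ s - 1) * riemannZeta s by
    rw [← hhalf.tsum_eq]; congr! 3; ring] at hseries
  calc _ = ∑' n : ℕ, Ring.choose (-s) (n + 1) * (-(1 / 2)) ^ (n + 1) *
          riemannZeta (s + ↑(n + 1)) :=
        tsum_congr fun n ↦ by rw [Ring.choose_neg_eq_prod]; push_cast; ring
    _ = ((2 : ℂ) ^ s - 1) * riemannZeta s - riemannZeta s := by
        rw [((hasSum_nat_add_iff' 1).mpr hseries).tsum_eq, sum_range_one]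
        simp only [Ring.choose_zero_right', pow_zero, mul_one, CharP.cast_eq_zero, add_zero,
          one_mul]
    _ = ((2 : ℂ) ^ s - 2) * riemannZeta s := by ring
end

section
/- For real β with 0 ≤ β < 1 and complex s, the bound ∑_{i≥0} |s(s+1)⋯(s+i-1)|/i! · β^i ≤ (1−β)^{-|s|} holds, where the left side is the series of absolute values of binomial coefficients |(-s choose i)| β^i. -/
/-
The coefficients `s(s+1)⋯(s+i-1)/i!` are dominated in absolute value by the same coefficients
taken at `|s|`, since `|s + j| ≤ |s| + j`. For the real exponent `a = |s|` these are the
coefficients `choose (a + i - 1) i` of the binomial series of `(1 - x)^(-a)`, which converges to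
that value for `|x| < 1`; comparison then gives summability and the bound.
-/

open Finset
open scoped Nat

theorem ascPochhammer_eval_eq_prod_range {R : Type*} [CommSemiring R] (n : ℕ) (r : R) :
    (ascPochhammer R n).eval r = ∏ j ∈ range n, (r + j) := by
  induction n with
  | zero => simp
  | succ n ih => rw [ascPochhammer_succ_eval, ih, prod_range_succ]

theorem Ring.choose_add_sub_one_eq_prod_range_div_factorial {K : Type*} [Field K] [CharZero K]
    (a : K) (n : ℕ) : Ring.choose (a + n - 1) n = (∏ j ∈ range n, (a + j)) / n ! := by
  rw [← Ring.multichoose_eq, eq_div_iff (Nat.cast_ne_zero.mpr n.factorial_ne_zero),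
    ← ascPochhammer_eval_eq_prod_range, ← Polynomial.ascPochhammer_smeval_eq_eval,
    ← Ring.factorial_nsmul_multichoose_eq_ascPochhammer, nsmul_eq_mul, mul_comm]

theorem hasSum_prod_range_div_factorial_mul_pow (a : ℝ) {x : ℝ} (hx : |x| < 1) :
    HasSum (fun n ↦ (∏ j ∈ range n, (a + j)) / n ! * x ^ n) ((1 - x) ^ (-a)) := by
  have hx_mem : x ∈ Metric.eball (0 : ℝ) 1 := by
    simpa [Metric.mem_eball, edist_dist, Real.dist_eq] using hx
  have h := (Real.one_div_one_sub_rpow_hasFPowerSeriesOnBall_zero a).hasSum hx_mem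
  simp only [FormalMultilinearSeries.ofScalars_apply_eq, zero_add, smul_eq_mul,
    Ring.choose_add_sub_one_eq_prod_range_div_factorial] at h
  rwa [Real.rpow_neg (by linarith [abs_lt.mp hx]), ← one_div]

theorem norm_prod_range_add_natCast_le {R : Type*} [NormedCommRing R] [NormOneClass R]
    (s : R) (n : ℕ) : ‖∏ j ∈ range n, (s + j)‖ ≤ ∏ j ∈ range n, (‖s‖ + j) := by
  refine (Finset.norm_prod_le _ _).trans (prod_le_prod (fun _ _ ↦ norm_nonneg _) fun j _ ↦ ?_)
  calc ‖s + j‖ ≤ ‖s‖ + ‖(j : R)‖ := norm_add_le _ _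
    _ ≤ ‖s‖ + j := by simpa using Nat.norm_cast_le (α := R) j

/-- For `0 ≤ β < 1` and complex `s`, the series of absolute values of the rising-factorial
coefficients satisfies `∑_{i≥0} |s(s+1)⋯(s+i-1)|/i! · β^i ≤ (1−β)^{-|s|}`. -/
theorem pochhammer_abs_series_bound (β : ℝ) (hβ0 : 0 ≤ β) (hβ : β < 1) (s : ℂ) :
    Summable (fun i : ℕ => ‖∏ j ∈ Finset.range i, (s + j)‖ / (i.factorial : ℝ)
      * β ^ i) ∧
    ∑' i : ℕ, ‖∏ j ∈ Finset.range i, (s + j)‖ / (i.factorial : ℝ) * β ^ i ≤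
      (1 - β) ^ (-‖s‖) := by
  have h_major := hasSum_prod_range_div_factorial_mul_pow ‖s‖ (abs_lt.mpr ⟨by linarith, hβ⟩)
  have h_le (i : ℕ) : ‖∏ j ∈ range i, (s + j)‖ / i ! * β ^ i ≤
      (∏ j ∈ range i, (‖s‖ + j)) / i ! * β ^ i := by
    gcongr
    exact norm_prod_range_add_natCast_le s i
  have h_summable : Summable fun i : ℕ ↦ ‖∏ j ∈ range i, (s + j)‖ / i ! * β ^ i :=
    h_major.summable.of_nonneg_of_le (fun i ↦ by positivity) h_le
  exact ⟨h_summable, hasSum_le h_le h_summable.hasSum h_major⟩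
end
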